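/- arXiv:1911.02159 — 4 statements merged into one kernel-verified Lean document; each statement's English description precedes it below -/
import Mathlib

section
/- Let γ > 1, a∞ > 0, ρ₀ > 0, v₀ ∈ ℝ, and for α > 0 set ρ = αρ₀ and v = v₀ - √(2ρ₀^{γ-1}(α-1)(α^{γ-1}-1)/((γ-1)a∞²(α+1))). Then with u₀(ρ,v) = -(1/2)v² - (ρ^{γ-1}-1)/((γ-1)a∞²), the Rankine–Hugoniot expression F(α,v) := (αv - v₀)(v - v₀) - (α - 1)(u₀(ρ₀,v₀) - u₀(αρ₀, v)) vanishes. -/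
/-!
With `s := v₀ - v`, the Rankine–Hugoniot expression collapses to
`(α + 1) s² / 2 - (α - 1) (h(αρ₀) - h(ρ₀))`, where `h ρ = (ρ^(γ-1) - 1) / ((γ-1) a²)` is the
enthalpy part of `u₀`; the prescribed `s` is exactly the nonnegative root of this quadratic.
The radicand is nonnegative because `α ↦ α^(γ-1) - 1` has the sign of `(α - 1)(γ - 1)`.
-/

theorem sub_one_mul_rpow_sub_one_div_nonneg {x : ℝ} (hx : 0 < x) (p : ℝ) :
    0 ≤ (x - 1) * (x ^ p - 1) / p := by
  rcases le_total 0 p with hp | hp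
  · refine div_nonneg ?_ hp
    rcases le_total 1 x with h1 | h1
    · exact mul_nonneg (by linarith) (by linarith [Real.one_le_rpow h1 hp])
    · exact mul_nonneg_of_nonpos_of_nonpos (by linarith)
        (by linarith [Real.rpow_le_one hx.le h1 hp])
  · refine div_nonneg_of_nonpos ?_ hp
    rcases le_total 1 x with h1 | h1
    · exact mul_nonpos_of_nonneg_of_nonpos (by linarith)
        (by linarith [Real.rpow_le_one_of_one_le_of_nonpos h1 hp])
    · exact mul_nonpos_of_nonpos_of_nonneg (by linarith)
        (by linarith [Real.one_le_rpow_of_pos_of_le_one_of_nonpos hx h1 hp])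

theorem rankineHugoniot_eq_zero_of_sq_eq {α v₀ s h₀ h₁ : ℝ}
    (hs : (α + 1) * s ^ 2 = 2 * (α - 1) * (h₁ - h₀)) :
    (α * (v₀ - s) - v₀) * (v₀ - s - v₀) -
        (α - 1) * ((-(1 / 2) * v₀ ^ 2 - h₀) - (-(1 / 2) * (v₀ - s) ^ 2 - h₁)) = 0 := by
  linear_combination hs / 2

theorem stmt_4_general (γ a ρ₀ v₀ α : ℝ) (hρ₀ : 0 < ρ₀) (hα : 0 < α)
    (v : ℝ)
    (hv : v = v₀ - Real.sqrt (2 * ρ₀ ^ (γ - 1) * (α - 1) * (α ^ (γ - 1) - 1) /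
        ((γ - 1) * a ^ 2 * (α + 1))))
    (u₀ : ℝ → ℝ → ℝ)
    (hu₀ : ∀ ρ w, u₀ ρ w = -(1 / 2) * w ^ 2 - (ρ ^ (γ - 1) - 1) / ((γ - 1) * a ^ 2)) :
    (α * v - v₀) * (v - v₀) - (α - 1) * (u₀ ρ₀ v₀ - u₀ (α * ρ₀) v) = 0 := by
  have hα₁ : α + 1 ≠ 0 := by positivity
  have hradicand : 0 ≤ 2 * ρ₀ ^ (γ - 1) * (α - 1) * (α ^ (γ - 1) - 1) /
      ((γ - 1) * a ^ 2 * (α + 1)) := by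
    refine (mul_nonneg (by positivity : 0 ≤ 2 * ρ₀ ^ (γ - 1) / (a ^ 2 * (α + 1)))
      (sub_one_mul_rpow_sub_one_div_nonneg hα (γ - 1))).trans_eq ?_
    simp only [div_eq_mul_inv, mul_inv]
    ring
  rw [hu₀, hu₀, hv]
  apply rankineHugoniot_eq_zero_of_sq_eq
  rw [Real.sq_sqrt hradicand, Real.mul_rpow hα.le hρ₀.le,
    mul_comm ((γ - 1) * a ^ 2), ← div_div, ← mul_div_assoc, mul_div_cancel₀ _ hα₁]
  ring

/-- The explicit shock curve v = v₀ - √(2ρ₀^(γ-1)(α-1)(α^(γ-1)-1)/((γ-1)a²(α+1)))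
    makes the Rankine–Hugoniot expression F(α,v) vanish. -/
theorem stmt_4 (γ a ρ₀ v₀ α : ℝ) (hγ : 1 < γ) (ha : 0 < a) (hρ₀ : 0 < ρ₀) (hα : 0 < α)
    (v : ℝ)
    (hv : v = v₀ - Real.sqrt (2 * ρ₀ ^ (γ - 1) * (α - 1) * (α ^ (γ - 1) - 1) /
        ((γ - 1) * a ^ 2 * (α + 1))))
    (u₀ : ℝ → ℝ → ℝ)
    (hu₀ : ∀ ρ w, u₀ ρ w = -(1 / 2) * w ^ 2 - (ρ ^ (γ - 1) - 1) / ((γ - 1) * a ^ 2)) :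
    (α * v - v₀) * (v - v₀) - (α - 1) * (u₀ ρ₀ v₀ - u₀ (α * ρ₀) v) = 0 :=
  stmt_4_general γ a ρ₀ v₀ α hρ₀ hα v hv u₀ hu₀
end

section
/- For every γ ∈ [1,2] and every α ∈ (0,1), the quantity Δ₀(α,γ) := 2α^γ - (γ+1)α² + 2α - 3 + γ is strictly negative. Moreover ∂Δ₀/∂α = 2γα^{γ-1} - 2(γ+1)α + 2 > 0 for α ∈ (0,1) and Δ₀(1,γ) = 0. -/
/-! For `0 ≤ γ ≤ 2` and `0 < x < 1` we have `x ≤ x ^ (γ - 1)`, so the derivative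
`2γ x^(γ-1) - 2(γ+1)x + 2` is at least `2(1 - x) > 0`. Hence `Δ₀(·, γ)` is strictly increasing
on `(0, 1]`, and it vanishes at `1`, so it is negative on `(0, 1)`. -/

open Set

noncomputable def Δ₀ (γ x : ℝ) : ℝ := 2 * x ^ γ - (γ + 1) * x ^ 2 + 2 * x - 3 + γ

lemma Δ₀_one (γ : ℝ) : Δ₀ γ 1 = 0 := by
  simp only [Δ₀, Real.one_rpow, one_pow]
  ring

lemma hasDerivAt_Δ₀ (γ : ℝ) {x : ℝ} (hx : x ≠ 0) :
    HasDerivAt (Δ₀ γ) (2 * γ * x ^ (γ - 1) - 2 * (γ + 1) * x + 2) x := by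
  have hrpow : HasDerivAt (fun x : ℝ => x ^ γ) (γ * x ^ (γ - 1)) x :=
    Real.hasDerivAt_rpow_const (Or.inl hx)
  have hsq : HasDerivAt (fun x : ℝ => x ^ 2) (2 * x) x := by
    simpa using hasDerivAt_pow 2 x
  exact ((((hrpow.const_mul 2).sub (hsq.const_mul (γ + 1))).add
    ((hasDerivAt_id x).const_mul 2)).sub_const 3).add_const γ |>.congr_deriv (by ring)

lemma deriv_Δ₀_pos {γ x : ℝ} (hγ0 : 0 ≤ γ) (hγ2 : γ ≤ 2) (hx0 : 0 < x) (hx1 : x < 1) :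
    0 < 2 * γ * x ^ (γ - 1) - 2 * (γ + 1) * x + 2 := by
  have hx_le : x ≤ x ^ (γ - 1) := by
    simpa using Real.rpow_le_rpow_of_exponent_ge hx0 hx1.le (by linarith : γ - 1 ≤ 1)
  nlinarith [mul_le_mul_of_nonneg_left hx_le hγ0]

lemma strictMonoOn_Δ₀ {γ : ℝ} (hγ0 : 0 ≤ γ) (hγ2 : γ ≤ 2) : StrictMonoOn (Δ₀ γ) (Ioc 0 1) := by
  apply strictMonoOn_of_deriv_pos (convex_Ioc 0 1)
  · exact fun x hx => (hasDerivAt_Δ₀ γ hx.1.ne').continuousAt.continuousWithinAt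
  · intro x hx
    rw [interior_Ioc] at hx
    rw [(hasDerivAt_Δ₀ γ hx.1.ne').deriv]
    exact deriv_Δ₀_pos hγ0 hγ2 hx.1 hx.2

lemma Δ₀_neg {γ x : ℝ} (hγ0 : 0 ≤ γ) (hγ2 : γ ≤ 2) (hx0 : 0 < x) (hx1 : x < 1) : Δ₀ γ x < 0 :=
  Δ₀_one γ ▸ strictMonoOn_Δ₀ hγ0 hγ2 ⟨hx0, hx1.le⟩ ⟨one_pos, le_rfl⟩ hx1

/-- Δ₀(α,γ) = 2α^γ - (γ+1)α² + 2α - 3 + γ is negative on (0,1), its derivative is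
    positive there, and Δ₀(1,γ) = 0. -/
theorem stmt_7 (γ : ℝ) (hγ : γ ∈ Set.Icc (1:ℝ) 2) (α : ℝ) (hα : α ∈ Set.Ioo (0:ℝ) 1) :
    (2 * α ^ γ - (γ + 1) * α ^ 2 + 2 * α - 3 + γ < 0) ∧
    HasDerivAt (fun x : ℝ => 2 * x ^ γ - (γ + 1) * x ^ 2 + 2 * x - 3 + γ)
      (2 * γ * α ^ (γ - 1) - 2 * (γ + 1) * α + 2) α ∧
    (0 < 2 * γ * α ^ (γ - 1) - 2 * (γ + 1) * α + 2) ∧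
    (2 * (1:ℝ) ^ γ - (γ + 1) * (1:ℝ) ^ 2 + 2 * 1 - 3 + γ = 0) := by
  obtain ⟨hγ1, hγ2⟩ := hγ
  obtain ⟨hα0, hα1⟩ := hα
  have hγ0 : 0 ≤ γ := by linarith
  exact ⟨Δ₀_neg hγ0 hγ2 hα0 hα1, hasDerivAt_Δ₀ γ hα0.ne', deriv_Δ₀_pos hγ0 hγ2 hα0 hα1,
    Δ₀_one γ⟩
end

section
/- Let γ ∈ (1,2] and α ∈ (0,1). Define J(α,γ) = 2[(γ+1)α² - 2α + 3 - γ]·((1-α^{γ-1})/(γ-1))² - 4(1-α²)α^{γ-1}·((1-α^{γ-1})/(γ-1)) + (1-α²)²α^{γ-2}. Then J(α,γ) > 0. -/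
/-!
Read `J` as the quadratic `A X² + B X + C` in `X = (1 - α^(γ-1)) / (γ - 1)`. Its discriminant is
`8 (1 - α²)² α^(γ-2) (2 α^γ - (γ+1) α² + 2 α - 3 + γ)`, and Bernoulli's inequality
`α^(γ-1) ≤ 1 + (γ-1)(α-1)` gives `2 α^γ < (γ+1) α² - 2 α + 3 - γ` with room `(3-γ)(α-1)²`.
So the discriminant is negative and the leading coefficient positive, whence `J > 0`.
-/

open Real

theorem quadratic_pos_of_discrim_neg {K : Type*} [Field K] [LinearOrder K] [IsStrictOrderedRing K]
    {a b c : K} (ha : 0 < a) (h : discrim a b c < 0) (x : K) :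
    0 < a * (x * x) + b * x + c := by
  have hsq : 4 * a * (a * (x * x) + b * x + c) = (2 * a * x + b) ^ 2 - discrim a b c := by
    rw [discrim]; ring
  have : 0 < 4 * a * (a * (x * x) + b * x + c) := by
    rw [hsq]; nlinarith [sq_nonneg (2 * a * x + b)]
  exact pos_of_mul_pos_right this (by positivity)

theorem two_mul_rpow_lt {α γ : ℝ} (hα0 : 0 < α) (hα1 : α ≠ 1) (hγ1 : 1 ≤ γ) (hγ2 : γ ≤ 2) :
    2 * α ^ γ < (γ + 1) * α ^ 2 - 2 * α + 3 - γ := by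
  have hbern : α ^ (γ - 1) ≤ 1 + (γ - 1) * (α - 1) := by
    simpa using rpow_one_add_le_one_add_mul_self (s := α - 1) (by linarith) (p := γ - 1)
      (by linarith) (by linarith)
  have hsplit : α ^ γ = α * α ^ (γ - 1) := by
    rw [rpow_sub hα0, rpow_one, mul_div_cancel₀ _ hα0.ne']
  have hgap : 0 < (3 - γ) * (α - 1) ^ 2 :=
    mul_pos (by linarith) (sq_pos_of_ne_zero (sub_ne_zero.mpr hα1))
  rw [hsplit]
  nlinarith [mul_le_mul_of_nonneg_left hbern hα0.le]

theorem discrim_rpow_quadratic {α : ℝ} (γ : ℝ) (hα0 : 0 < α) :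
    discrim (2 * ((γ + 1) * α ^ 2 - 2 * α + 3 - γ)) (-4 * (1 - α ^ 2) * α ^ (γ - 1))
        ((1 - α ^ 2) ^ 2 * α ^ (γ - 2)) =
      8 * (1 - α ^ 2) ^ 2 * α ^ (γ - 2) * (2 * α ^ γ - (γ + 1) * α ^ 2 + 2 * α - 3 + γ) := by
  have hsq : (α ^ (γ - 1)) ^ 2 = α ^ (γ - 2) * α ^ γ := by
    rw [← rpow_natCast, ← rpow_mul hα0.le, ← rpow_add hα0]
    ring_nf
  rw [discrim]
  linear_combination 16 * (1 - α ^ 2) ^ 2 * hsq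

/-- Positivity of J(α,γ) for γ ∈ (1,2], α ∈ (0,1). -/
theorem stmt_8 (γ α : ℝ) (hγ : γ ∈ Set.Ioc (1:ℝ) 2) (hα : α ∈ Set.Ioo (0:ℝ) 1) :
    0 < 2 * ((γ + 1) * α ^ 2 - 2 * α + 3 - γ) * ((1 - α ^ (γ - 1)) / (γ - 1)) ^ 2
      - 4 * (1 - α ^ 2) * α ^ (γ - 1) * ((1 - α ^ (γ - 1)) / (γ - 1))
      + (1 - α ^ 2) ^ 2 * α ^ (γ - 2) := by
  obtain ⟨hγ1, hγ2⟩ := hγ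
  obtain ⟨hα0, hα1⟩ := hα
  have hlt := two_mul_rpow_lt hα0 hα1.ne hγ1.le hγ2
  have hlead : 0 < 2 * ((γ + 1) * α ^ 2 - 2 * α + 3 - γ) := by
    nlinarith [rpow_pos_of_pos hα0 γ]
  have hdisc : discrim (2 * ((γ + 1) * α ^ 2 - 2 * α + 3 - γ)) (-4 * (1 - α ^ 2) * α ^ (γ - 1))
      ((1 - α ^ 2) ^ 2 * α ^ (γ - 2)) < 0 := by
    rw [discrim_rpow_quadratic γ hα0]
    have : 0 < 1 - α ^ 2 := by nlinarith
    exact mul_neg_of_pos_of_neg (by positivity) (by linarith)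
  have hquad := quadratic_pos_of_discrim_neg hlead hdisc ((1 - α ^ (γ - 1)) / (γ - 1))
  linear_combination hquad
end

section
/- Let γ ∈ (1,2] and α ∈ (0,1). Set A(α) = 2(1-α^{γ-1}) + (γ-1)(1-α²)α^{γ-2} and B(α) = √(2(γ-1)(1-α)(1-α^{γ-1})(1+α)³α^{γ-3}), and define Ψ₁(α) = -(A(α) - B(α))/(A(α) + B(α)). Then 0 < Ψ₁(α) < 1. -/
/-!
Put `p = γ - 1` and `x = α ^ p`. Then `A = 2 (u + w)` and `α B² = 4 u w (1 + α)²` with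
`u = 1 - x` and `w = p (1 - α²) x / (2α)`, so that `α (B² - A²) = 4 (u - α w) (w - α u)`.
Both factors are positive by Bernoulli's inequality for `s = α²` raised to the powers `p / 2` and
`1 - p / 2`. Hence `0 < A < B`, which is exactly `0 < (B - A) / (A + B) < 1`.
-/

open Real

lemma rpow_lt_one_sub_mul_one_sub {s q : ℝ} (hs0 : 0 < s) (hs1 : s < 1) (hq0 : 0 < q)
    (hq1 : q < 1) : s ^ q < 1 - q * (1 - s) := by
  have h := rpow_one_add_lt_one_add_mul_self (s := s - 1) (by linarith) (by linarith) hq0 hq1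
  rw [add_sub_cancel] at h
  linarith

lemma rpow_mul_one_add_mul_one_sub_lt_one {s q : ℝ} (hs0 : 0 < s) (hs1 : s < 1) (hq0 : 0 < q)
    (hq1 : q < 1) : s ^ q * (1 + q * (1 - s)) < 1 := by
  have h := rpow_lt_one_sub_mul_one_sub hs0 hs1 hq0 hq1
  have hpos : 0 < 1 + q * (1 - s) := by nlinarith
  calc s ^ q * (1 + q * (1 - s)) < (1 - q * (1 - s)) * (1 + q * (1 - s)) :=
        mul_lt_mul_of_pos_right h hpos
    _ = 1 - (q * (1 - s)) ^ 2 := by ring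
    _ < 1 := by nlinarith [mul_pos hq0 (sub_pos.2 hs1)]

lemma mul_one_sub_rpow_lt {s q : ℝ} (hs0 : 0 < s) (hs1 : s < 1) (hq0 : 0 < q) (hq1 : q < 1) :
    s * (1 - s ^ q) < q * (1 - s) * s ^ q := by
  have h := rpow_lt_one_sub_mul_one_sub hs0 hs1 (sub_pos.2 hq1) (sub_lt_self 1 hq0)
  have hsq : 0 < s ^ q := rpow_pos_of_pos hs0 q
  rw [rpow_sub hs0, rpow_one, div_lt_iff₀ hsq] at h
  linarith

lemma two_mul_add_lt_sqrt {α u w : ℝ} (hα : 0 < α) (hu0 : 0 < u) (hu : α * w < u)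
    (hw : α * u < w) : 2 * (u + w) < √(4 * u * w * (1 + α) ^ 2 / α) := by
  have hw0 : 0 < w := by nlinarith
  rw [lt_sqrt (by positivity), lt_div_iff₀ hα]
  -- `4 u w (1 + α)² - α (2 (u + w))² = 4 (u - α w) (w - α u)`
  nlinarith [mul_pos (sub_pos.2 hu) (sub_pos.2 hw)]

lemma neg_sub_div_add_mem_Ioo {A B : ℝ} (hA : 0 < A) (hAB : A < B) :
    0 < -((A - B) / (A + B)) ∧ -((A - B) / (A + B)) < 1 := by
  rw [← neg_div, neg_sub]
  exact ⟨div_pos (sub_pos.2 hAB) (by linarith), (div_lt_one (by linarith)).2 (by linarith)⟩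

/-- The slope Ψ₁ = -(A-B)/(A+B) of the 1-shock curve lies in (0,1). -/
theorem stmt_9 (γ α : ℝ) (hγ : γ ∈ Set.Ioc (1:ℝ) 2) (hα : α ∈ Set.Ioo (0:ℝ) 1)
    (A B : ℝ)
    (hA : A = 2 * (1 - α ^ (γ - 1)) + (γ - 1) * (1 - α ^ 2) * α ^ (γ - 2))
    (hB : B = Real.sqrt (2 * (γ - 1) * (1 - α) * (1 - α ^ (γ - 1)) * (1 + α) ^ 3 *
        α ^ (γ - 3))) :
    0 < -((A - B) / (A + B)) ∧ -((A - B) / (A + B)) < 1 := by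
  obtain ⟨hγ1, hγ2⟩ := hγ
  obtain ⟨hα0, hα1⟩ := hα
  set p := γ - 1
  have hx : α ^ p = (α ^ 2) ^ (p / 2) := by
    rw [← rpow_natCast, ← rpow_mul hα0.le]; ring_nf
  have hs0 : 0 < α ^ 2 := by positivity
  have hs1 : α ^ 2 < 1 := by nlinarith
  have hq0 : 0 < p / 2 := by linarith
  have hq1 : p / 2 < 1 := by linarith
  have hbern₁ := rpow_mul_one_add_mul_one_sub_lt_one hs0 hs1 hq0 hq1
  have hbern₂ := mul_one_sub_rpow_lt hs0 hs1 hq0 hq1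
  rw [← hx] at hbern₁ hbern₂
  set x := α ^ p
  have hx0 : 0 < x := rpow_pos_of_pos hα0 p
  have hpow (k : ℝ) : α ^ (γ - k) = x / α ^ (k - 1) := by
    rw [show γ - k = p - (k - 1) by ring, rpow_sub hα0]
  obtain ⟨w, hw⟩ : ∃ w, w = p * (1 - α ^ 2) * x / (2 * α) := ⟨_, rfl⟩
  have hA' : A = 2 * ((1 - x) + w) := by
    rw [hA, hpow, show (2:ℝ) - 1 = 1 by norm_num, rpow_one, hw]
    field_simp
  have hB' : B = √(4 * (1 - x) * w * (1 + α) ^ 2 / α) := by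
    rw [hB, hpow, show (3:ℝ) - 1 = 2 by norm_num, rpow_two, hw]
    congr 1
    field_simp
    ring
  have hαw : α * w < 1 - x := by
    rw [hw]; field_simp; linarith
  have hαu : α * (1 - x) < w := by
    rw [hw, lt_div_iff₀ (by positivity)]; linarith
  have hu0 : 0 < 1 - x := by nlinarith
  have hA0 : 0 < A := by rw [hA']; nlinarith
  exact neg_sub_div_add_mem_Ioo hA0 (hA' ▸ hB' ▸ two_mul_add_lt_sqrt hα0 hu0 hαw hαu)
end
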